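/- Let x_{k+1} = A x_k + B u_k with (A,B) controllable, and suppose the input sequence u_0,…,u_{T−1} is persistently exciting of order n_x + t. Then the stacked matrix [H_1(x); H_t(u)] formed from the state Hankel matrix of depth 1 and input Hankel matrix of depth t has full row rank (Willems' fundamental lemma rank condition). -/

import Mathlib

open Matrix Finset

/-!
If `(ξ, η)` annihilates the columns of `[H_1(x); H_t(u)]`, the dynamics `x_{j+1} = A x_j + B u_j`
turn it, step by step, into rows `(ξ A^k, ξ A^{k-1} B, …, ξ B, η)` annihilating the columns of
`[H_1(x); H_{t+k}(u)]`. Combining the rows for `k = 0, …, n_x` with the coefficients of the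
characteristic polynomial of `A` removes the state part (Cayley–Hamilton), so persistent
excitation of order `n_x + t` makes the combined input part vanish. As the characteristic
polynomial is monic this is a triangular system, which yields `η = 0` and `ξ A^k B = 0` for
`k < n_x`, hence for every `k`; controllability then gives `ξ = 0`.
-/

theorem Matrix.rank_eq_card_height_iff {m n K : Type*} [Fintype m] [Fintype n] [Field K]
    (M : Matrix m n K) : M.rank = Fintype.card m ↔ ∀ v, v ᵥ* M = 0 → v = 0 := by
  have hinj : Function.Injective M.vecMul ↔ ∀ v, v ᵥ* M = 0 → v = 0 :=
    injective_iff_map_eq_zero M.vecMulLinear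
  rw [← hinj, vecMul_injective_iff]
  refine ⟨fun h => linearIndependent_iff_card_eq_finrank_span.mpr ?_,
    LinearIndependent.rank_matrix⟩
  rw [← h, rank_eq_finrank_span_row, Set.finrank]

theorem Matrix.vecMul_pow_mul_eq_zero_of_forall_lt {ι κ K : Type*} [Fintype ι] [DecidableEq ι]
    [Field K] (A : Matrix ι ι K) (B : Matrix ι κ K) {a : ι → K}
    (h : ∀ k < Fintype.card ι, a ᵥ* (A ^ k * B) = 0) (k : ℕ) : a ᵥ* (A ^ k * B) = 0 := by
  rw [pow_eq_aeval_mod_charpoly, Polynomial.aeval_eq_sum_range, Matrix.sum_mul, vecMul_sum]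
  refine sum_eq_zero fun i _ => ?_
  rw [smul_mul, vecMul_smul]
  rcases lt_or_ge i (Fintype.card ι) with hi | hi
  · rw [h i hi, smul_zero]
  · rw [Polynomial.coeff_eq_zero_of_degree_lt, zero_smul]
    calc _ < A.charpoly.degree := Polynomial.degree_modByMonic_lt _ A.charpoly_monic
      _ = Fintype.card ι := A.charpoly_degree_eq_dim
      _ ≤ i := by exact_mod_cast hi

section ShiftedRow

variable {K V : Type*}

/-- The row `(g_{k-1}, …, g_0, η_0, η_1, …)`; with `g_i = ξ A^i B` it is the input part of the
kernel row `(ξ, η)` after `k` steps of the dynamics. -/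
def shiftedRow (g η : ℕ → V) (k : ℕ) : ℕ → V := fun i => if i < k then g (k - 1 - i) else η (i - k)

@[simp]
theorem shiftedRow_zero (g η : ℕ → V) : shiftedRow g η 0 = η := by
  funext i; simp [shiftedRow]

theorem shiftedRow_succ_zero (g η : ℕ → V) (k : ℕ) : shiftedRow g η (k + 1) 0 = g k := by
  simp [shiftedRow]

theorem shiftedRow_succ_succ (g η : ℕ → V) (k i : ℕ) :
    shiftedRow g η (k + 1) (i + 1) = shiftedRow g η k i := by
  unfold shiftedRow
  split_ifs <;> first | omega | congr 1; omega

theorem eq_zero_of_sum_smul_shiftedRow_add_eq_zero [Semiring K] [AddCommMonoid V] [Module K V]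
    {c : ℕ → K} {N t : ℕ} (hc : c N = 1) {g η : ℕ → V} (hη : ∀ i, t ≤ i → η i = 0)
    (h : ∀ i < t, ∑ k ∈ range (N + 1), c k • shiftedRow g η k (N + i) = 0) : η = 0 := by
  suffices ∀ r i, t ≤ i + r → η i = 0 from funext fun i => this t i (by omega)
  intro r
  induction r with
  | zero => exact fun i hi => hη i (by omega)
  | succ r ih =>
    intro i hi
    rcases le_or_gt t i with hti | hit
    · exact hη i hti
    have hlow : ∀ k ∈ range N, c k • shiftedRow g η k (N + i) = 0 := fun k hk => by
      rw [mem_range] at hk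
      rw [shiftedRow, if_neg (by omega), ih _ (by omega), smul_zero]
    have hi := h i hit
    rw [sum_range_succ, sum_eq_zero hlow, zero_add, hc, one_smul] at hi
    simpa [shiftedRow] using hi

theorem eq_zero_of_sum_smul_shiftedRow_zero_eq_zero [Semiring K] [AddCommMonoid V] [Module K V]
    {c : ℕ → K} {N : ℕ} (hc : c N = 1) {g : ℕ → V}
    (h : ∀ i < N, ∑ k ∈ range (N + 1), c k • shiftedRow g 0 k i = 0) :
    ∀ s < N, g s = 0 := by
  intro s
  induction s using Nat.strong_induction_on with
  | _ s ih =>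
    intro hs
    have hlow : ∀ k ∈ range N, c k • shiftedRow g 0 k (N - 1 - s) = 0 := fun k hk => by
      rw [mem_range] at hk
      rw [shiftedRow]
      split_ifs
      · rw [ih _ (by omega) (by omega), smul_zero]
      · simp
    have hs' := h (N - 1 - s) (by omega)
    rw [sum_range_succ, sum_eq_zero hlow, zero_add, hc, one_smul] at hs'
    simpa [shiftedRow, show N - 1 - s < N by omega, show N - 1 - (N - 1 - s) = s by omega]
      using hs'

end ShiftedRow

section Hankel

variable {ι κ K : Type*} [Fintype ι] [Fintype κ] [Field K]

def hankel (u : ℕ → κ → K) (d N : ℕ) : Matrix (Fin d × κ) (Fin N) K :=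
  Matrix.of fun ip j => u (ip.1 + j) ip.2

theorem vecMul_hankel_apply (u : ℕ → κ → K) {d N : ℕ} (w : Fin d × κ → K) (j : Fin N) :
    (w ᵥ* hankel u d N) j = ∑ i : Fin d, (fun p => w (i, p)) ⬝ᵥ u (i + j) := by
  simp [vecMul, dotProduct, hankel, Fintype.sum_prod_type]

def toBlockSeq {d : ℕ} (w : Fin d × κ → K) : ℕ → κ → K :=
  fun i p => if h : i < d then w (⟨i, h⟩, p) else 0

omit [Fintype κ] in
theorem toBlockSeq_of_le {d : ℕ} (w : Fin d × κ → K) {i : ℕ} (hi : d ≤ i) : toBlockSeq w i = 0 :=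
  funext fun _ => dif_neg (by omega)

theorem sum_toBlockSeq_dotProduct (u : ℕ → κ → K) {d D : ℕ} (hdD : d ≤ D) (w : Fin d × κ → K)
    (j : ℕ) : ∑ i ∈ range D, toBlockSeq w i ⬝ᵥ u (i + j)
      = ∑ i : Fin d, (fun p => w (i, p)) ⬝ᵥ u (i + j) := by
  rw [← sum_subset (range_subset_range.2 hdD), sum_range]
  · congr! with i
    exact dif_pos i.isLt
  · intro i _ hi
    rw [toBlockSeq_of_le w (by simpa using hi), zero_dotProduct]

/-- The row vectors `(a, b_0, …, b_{d-1})` whose product with each of the first `N + 1` columns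
of `[H_1(x); H_d(u)]` vanishes. -/
def hankelAnnihilator (x : ℕ → ι → K) (u : ℕ → κ → K) (d N : ℕ) :
    Submodule K ((ι → K) × (ℕ → κ → K)) where
  carrier := {p | ∀ j ≤ N, p.1 ⬝ᵥ x j + ∑ i ∈ range d, p.2 i ⬝ᵥ u (i + j) = 0}
  zero_mem' := by simp
  add_mem' := by
    intro p q hp hq j hj
    simp only [Prod.fst_add, Prod.snd_add, Pi.add_apply, add_dotProduct, sum_add_distrib]
    linear_combination hp j hj + hq j hj
  smul_mem' := by
    intro c p hp j hj
    simp only [Prod.smul_fst, Prod.smul_snd, Pi.smul_apply, smul_dotProduct, smul_eq_mul,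
      ← mul_sum, ← mul_add, hp j hj, mul_zero]

variable {x : ℕ → ι → K} {u : ℕ → κ → K}

theorem hankelAnnihilator_antitone (d : ℕ) : Antitone (hankelAnnihilator x u d) :=
  fun _ _ hN _ hp j hj => hp j (hj.trans hN)

theorem mem_hankelAnnihilator_of_vecMul_fromRows_eq_zero {d D N : ℕ} (hdD : d ≤ D)
    {ξ : ι → K} {ζ : Fin d × κ → K}
    (h : Sum.elim ξ ζ ᵥ* fromRows (of fun p (j : Fin (N + 1)) => x j p) (hankel u d (N + 1))
      = 0) :
    (ξ, toBlockSeq ζ) ∈ hankelAnnihilator x u D N := by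
  intro j hj
  have hj' := congrFun h ⟨j, by omega⟩
  rw [sumElim_vecMul_fromRows, Pi.add_apply, vecMul_hankel_apply] at hj'
  rw [sum_toBlockSeq_dotProduct u hdD]
  exact hj'

theorem eq_zero_of_rank_hankel {D N : ℕ} (hPE : (hankel u D (N + 1)).rank = D * Fintype.card κ)
    {b : ℕ → κ → K} (h : (0, b) ∈ hankelAnnihilator x u D N) : ∀ i < D, b i = 0 := by
  have hb := (rank_eq_card_height_iff (hankel u D (N + 1))).mp (by simpa using hPE)
    (fun ip => b ip.1 ip.2) <| by
    funext j
    simpa [vecMul_hankel_apply, sum_range] using h j (by omega)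
  exact fun i hi => funext fun p => congrFun hb (⟨i, hi⟩, p)

variable {A : Matrix ι ι K} {B : Matrix ι κ K}

theorem shift_mem_hankelAnnihilator (hdyn : ∀ k, x (k + 1) = A *ᵥ x k + B *ᵥ u k)
    {a : ι → K} {b b' : ℕ → κ → K} {d N : ℕ} (h₀ : b' 0 = a ᵥ* B)
    (hsucc : ∀ i, b' (i + 1) = b i) (hd : b d = 0)
    (h : (a, b) ∈ hankelAnnihilator x u (d + 1) (N + 1)) :
    (a ᵥ* A, b') ∈ hankelAnnihilator x u (d + 1) N := by
  intro j hj
  have hj' := h (j + 1) (by omega)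
  simp only [hdyn, dotProduct_add, dotProduct_mulVec, sum_range_succ, hd, zero_dotProduct,
    add_zero] at hj'
  simp only [sum_range_succ', hsucc, h₀]
  convert hj' using 1
  simp only [add_assoc, add_comm 1 j, zero_add]
  ring

theorem shiftedRow_mem_hankelAnnihilator [DecidableEq ι]
    (hdyn : ∀ k, x (k + 1) = A *ᵥ x k + B *ᵥ u k)
    {a : ι → K} {η : ℕ → κ → K} {t d : ℕ} (hη : ∀ i, t ≤ i → η i = 0) (k : ℕ)
    (hk : t + k ≤ d + 1) {N : ℕ} (h : (a, η) ∈ hankelAnnihilator x u (d + 1) (N + k)) :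
    (a ᵥ* A ^ k, shiftedRow (fun i => a ᵥ* (A ^ i * B)) η k) ∈
      hankelAnnihilator x u (d + 1) N := by
  induction k generalizing N with
  | zero => simpa using h
  | succ k ih =>
    rw [pow_succ, ← vecMul_vecMul]
    refine shift_mem_hankelAnnihilator hdyn ?_ (shiftedRow_succ_succ _ _ k) ?_
      (ih (by omega) (by rwa [show N + 1 + k = N + (k + 1) by omega]))
    · rw [shiftedRow_succ_zero, vecMul_vecMul]
    · rw [shiftedRow, if_neg (by omega), hη _ (by omega)]

theorem eq_zero_of_mem_hankelAnnihilator [DecidableEq ι]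
    (hdyn : ∀ k, x (k + 1) = A *ᵥ x k + B *ᵥ u k) {t N : ℕ} (ht : 0 < t)
    (hPE : (hankel u (Fintype.card ι + t) (N + 1)).rank
      = (Fintype.card ι + t) * Fintype.card κ)
    {a : ι → K} {η : ℕ → κ → K} (hη : ∀ i, t ≤ i → η i = 0)
    (h : (a, η) ∈ hankelAnnihilator x u (Fintype.card ι + t) (N + Fintype.card ι)) :
    η = 0 ∧ ∀ k, a ᵥ* (A ^ k * B) = 0 := by
  obtain ⟨d, hd⟩ : ∃ d, Fintype.card ι + t = d + 1 := ⟨Fintype.card ι + t - 1, by omega⟩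
  let c k := A.charpoly.coeff k
  let g i := a ᵥ* (A ^ i * B)
  have hc : c (Fintype.card ι) = 1 := by
    simpa [c, A.charpoly_natDegree_eq_dim] using A.charpoly_monic.coeff_natDegree
  have hrows : ∀ k ∈ range (Fintype.card ι + 1), (a ᵥ* A ^ k, shiftedRow g η k) ∈
      hankelAnnihilator x u (Fintype.card ι + t) N := by
    intro k hk
    rw [mem_range] at hk
    rw [hd] at h ⊢
    exact shiftedRow_mem_hankelAnnihilator hdyn hη k (by omega)
      (hankelAnnihilator_antitone _ (by omega) h)
  have hCH : ∑ k ∈ range (Fintype.card ι + 1), c k • (a ᵥ* A ^ k) = 0 := by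
    simp_rw [c, ← vecMul_smul, ← vecMul_sum]
    rw [← A.charpoly_natDegree_eq_dim, ← Polynomial.aeval_eq_sum_range, aeval_self_charpoly,
      vecMul_zero]
  have hW : (0, ∑ k ∈ range (Fintype.card ι + 1), c k • shiftedRow g η k) ∈
      hankelAnnihilator x u (Fintype.card ι + t) N := by
    convert Submodule.sum_mem _ fun k hk => Submodule.smul_mem _ (c k) (hrows k hk)
    ext1
    · simp only [Prod.fst_sum, Prod.smul_fst, hCH]
    · rw [Prod.snd_sum]
      rfl
  have hW0 : ∀ i < Fintype.card ι + t,
      ∑ k ∈ range (Fintype.card ι + 1), c k • shiftedRow g η k i = 0 := by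
    intro i hi
    simpa [Finset.sum_apply] using eq_zero_of_rank_hankel hPE hW i hi
  obtain rfl : η = 0 :=
    eq_zero_of_sum_smul_shiftedRow_add_eq_zero hc hη fun i hi => hW0 _ (by omega)
  exact ⟨rfl, vecMul_pow_mul_eq_zero_of_forall_lt A B
    (eq_zero_of_sum_smul_shiftedRow_zero_eq_zero hc fun i hi => hW0 i (by omega))⟩

end Hankel

/-- Willems' fundamental lemma rank condition: for a controllable pair `(A,B)` and a
state trajectory driven by an input which is persistently exciting of order `n_x + t`,
the stacked matrix `[H_1(x); H_t(u)]` has full row rank `n_x + t·n_u`. -/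
theorem willems_fundamental_rank {nx nu T t : ℕ} (ht : 1 ≤ t) (hT : nx + t ≤ T)
    (A : Matrix (Fin nx) (Fin nx) ℝ) (B : Matrix (Fin nx) (Fin nu) ℝ)
    (hctrb : ∀ v : Fin nx → ℝ, (∀ k : ℕ, Matrix.vecMul v (A ^ k * B) = 0) → v = 0)
    (u : ℕ → Fin nu → ℝ) (x : ℕ → Fin nx → ℝ)
    (hdyn : ∀ k, x (k + 1) = A.mulVec (x k) + B.mulVec (u k))
    (hPE : (Matrix.of fun (ip : Fin (nx + t) × Fin nu) (j : Fin (T - (nx + t) + 1)) =>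
        u ((ip.1 : ℕ) + (j : ℕ)) ip.2).rank = (nx + t) * nu) :
    (Matrix.fromRows
        (Matrix.of fun (p : Fin nx) (j : Fin (T - t + 1)) => x (j : ℕ) p)
        (Matrix.of fun (ip : Fin t × Fin nu) (j : Fin (T - t + 1)) =>
          u ((ip.1 : ℕ) + (j : ℕ)) ip.2)).rank = nx + t * nu := by
  rw [show nx + t * nu = Fintype.card (Fin nx ⊕ Fin t × Fin nu) by simp, rank_eq_card_height_iff]
  intro v hv
  rw [← Sum.elim_comp_inl_inr v] at hv ⊢
  have hmem := mem_hankelAnnihilator_of_vecMul_fromRows_eq_zero (D := nx + t) (by omega) hv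
  rw [show T - t = T - (nx + t) + nx by omega] at hmem
  obtain ⟨hζ, hξ⟩ := eq_zero_of_mem_hankelAnnihilator hdyn (N := T - (nx + t)) ht
    (by rw [Fintype.card_fin, Fintype.card_fin]; exact hPE)
    (fun _ => toBlockSeq_of_le _) (by simpa using hmem)
  ext (p | q)
  · exact congrFun (hctrb _ hξ) p
  · exact (dif_pos q.1.isLt).symm.trans (congrFun (congrFun hζ q.1) q.2)
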